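/- (Size-control part of Theorem 6 of the paper.) In the finite-sample Bernoulli testing framework, the likelihood ratio test φ̄ controls size over the composite null: for every p ∈ N(b), RP_{φ̄}(p) ≤ α. -/

import Mathlib

/-!
For a fixed test `φ`, `RP_φ(p)` is affine in each coordinate `p_i`, with slope a nonnegative
combination of the differences `φ(y[i ↦ 1]) - φ(y[i ↦ 0])`. Replace the coordinates of
`p ∈ N(b)` by those of `p̄` one at a time. Where `p̄_i = p̃_i`, flipping `y_i` scales both
likelihoods by the same positive factor, so `φ̄` ignores `y_i` and the rejection probability does
not move. Where `p̄_i = 1/2`, only `L(y; p̃)` depends on `y_i`, so `φ̄` is monotone in `y_i` in the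
direction of `p̃_i - 1/2`, and for `p ∈ N(b)` this is opposite to the direction of `p_i - 1/2`:
moving `p_i` to `1/2` cannot decrease the rejection probability. Hence `RP(p) ≤ RP(p̄) = α`.
-/

/-- Likelihood of the binary outcome vector `y` under Bernoulli probabilities `p`. -/
def lik {n : ℕ} (p : Fin n → ℝ) (y : Fin n → Bool) : ℝ :=
  ∏ i, if y i then p i else 1 - p i

/-- Rejection probability of the (possibly randomized) test `φ` under `p`. -/
def rejProb {n : ℕ} (φ : (Fin n → Bool) → ℝ) (p : Fin n → ℝ) : ℝ :=
  ∑ y : Fin n → Bool, φ y * lik p y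

/-- The set `N(b)` of Bernoulli probability vectors compatible with the null `β = b`. -/
def nullSet {n K : ℕ} (X : Fin n → Fin K → ℝ) (b : Fin K → ℝ) : Set (Fin n → ℝ) :=
  {p | (∀ i, p i ∈ Set.Icc (0 : ℝ) 1) ∧
    ∀ i, (0 ≤ (∑ j, X i j * b j) → 1/2 ≤ p i) ∧
         ((∑ j, X i j * b j) ≤ 0 → p i ≤ 1/2)}

/-- The least favorable null probabilities `p̄` paired with alternative `p̃`. -/
noncomputable def pbar {n K : ℕ} (X : Fin n → Fin K → ℝ) (b : Fin K → ℝ)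
    (pt : Fin n → ℝ) : Fin n → ℝ :=
  fun i => if (∑ j, X i j * b j) * (pt i - 1/2) < 0 ∨
      ((∑ j, X i j * b j) = 0 ∧ pt i < 1/2) then 1/2 else pt i

/-- The likelihood ratio test `φ̄` of `p̄` against `p̃`, with constant `k` and
randomization `ξ`. -/
noncomputable def lrt {n : ℕ} (pt pb : Fin n → ℝ) (k ξ : ℝ)
    (y : Fin n → Bool) : ℝ :=
  if k * lik pb y < lik pt y then 1
  else if lik pt y = k * lik pb y then ξ else 0

open Function

theorem le_of_forall_update_le {ι α β : Type*} [Fintype ι] [DecidableEq ι] [Preorder β]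
    (f : (ι → α) → β) {p q : ι → α}
    (h : ∀ r : ι → α, (∀ j, r j = p j ∨ r j = q j) → ∀ i,
      f (update r i (p i)) ≤ f (update r i (q i))) :
    f p ≤ f q := by
  suffices ∀ s : Finset ι, f p ≤ f (s.piecewise q p) by
    simpa using this Finset.univ
  intro s
  induction s using Finset.induction_on with
  | empty => simp
  | @insert i s hi ih =>
    have hr : ∀ j, s.piecewise q p j = p j ∨ s.piecewise q p j = q j := fun j => by
      by_cases hj : j ∈ s <;> simp [hj]
    calc f p ≤ f (s.piecewise q p) := ih
      _ = f (update (s.piecewise q p) i (p i)) := by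
        rw [← Finset.piecewise_eq_of_notMem s q p hi, update_eq_self]
      _ ≤ f ((insert i s).piecewise q p) := by
        rw [Finset.piecewise_insert]
        exact h _ hr i

theorem sum_update_true_add_update_false {ι M : Type*} [Fintype ι] [DecidableEq ι]
    [AddCommMonoid M] (i : ι) (f : (ι → Bool) → M) :
    ∑ y, (f (update y i true) + f (update y i false)) = 2 • ∑ y, f y := by
  have hflip : Involutive fun y : ι → Bool => update y i (!y i) := fun y => by
    funext j; by_cases hj : j = i <;> simp [hj]
  have hpair (y : ι → Bool) :
      f (update y i true) + f (update y i false) = f y + f (update y i (!y i)) := by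
    have hself := update_eq_self i y
    cases hy : y i <;> rw [hy] at hself
    · rw [hself, Bool.not_false, add_comm]
    · rw [hself, Bool.not_true]
  rw [Finset.sum_congr rfl fun y _ => hpair y, Finset.sum_add_distrib, two_nsmul]
  exact congrArg _ (Equiv.sum_comp (hflip.toPerm _) f)

section Likelihood

variable {n : ℕ}

def likErase (p : Fin n → ℝ) (i : Fin n) (y : Fin n → Bool) : ℝ :=
  ∏ j ∈ Finset.univ.erase i, if y j then p j else 1 - p j

theorem lik_update (p : Fin n → ℝ) (y : Fin n → Bool) (i : Fin n) (c : Bool) :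
    lik p (update y i c) = (if c then p i else 1 - p i) * likErase p i y := by
  rw [lik, ← Finset.mul_prod_erase _ _ (Finset.mem_univ i), update_self]
  congr 1
  exact Finset.prod_congr rfl fun j hj => by rw [update_of_ne (Finset.ne_of_mem_erase hj)]

theorem likErase_update (p : Fin n → ℝ) (i : Fin n) (t : ℝ) (y : Fin n → Bool) :
    likErase (update p i t) i y = likErase p i y :=
  Finset.prod_congr rfl fun j hj => by rw [update_of_ne (Finset.ne_of_mem_erase hj)]

theorem likErase_nonneg {p : Fin n → ℝ} (hp : ∀ j, p j ∈ Set.Icc (0 : ℝ) 1) (i : Fin n)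
    (y : Fin n → Bool) : 0 ≤ likErase p i y :=
  Finset.prod_nonneg fun j _ => by
    obtain ⟨hp0, hp1⟩ := hp j
    cases y j <;> simp only [Bool.false_eq_true, if_true, if_false] <;> linarith

theorem two_mul_rejProb_update (φ : (Fin n → Bool) → ℝ) (p : Fin n → ℝ) (i : Fin n) (t : ℝ) :
    2 * rejProb φ (update p i t) = ∑ y, (t * φ (update y i true) +
      (1 - t) * φ (update y i false)) * likErase p i y := by
  rw [rejProb, two_mul, ← two_nsmul, ← sum_update_true_add_update_false i]
  refine Finset.sum_congr rfl fun y _ => ?_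
  simp only [lik_update, update_self, likErase_update, if_true, Bool.false_eq_true, if_false]
  ring

theorem rejProb_update_le_of_sign {φ : (Fin n → Bool) → ℝ} {p : Fin n → ℝ}
    (hp : ∀ j, p j ∈ Set.Icc (0 : ℝ) 1) {i : Fin n} {s t : ℝ}
    (h : ∀ y, (t - s) * (φ (update y i true) - φ (update y i false)) ≤ 0) :
    rejProb φ (update p i t) ≤ rejProb φ (update p i s) := by
  suffices 2 * rejProb φ (update p i t) ≤ 2 * rejProb φ (update p i s) by linarith
  rw [two_mul_rejProb_update, two_mul_rejProb_update]
  exact Finset.sum_le_sum fun y _ =>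
    mul_le_mul_of_nonneg_right (by linarith [h y]) (likErase_nonneg hp i y)

end Likelihood

section LikelihoodRatioTest

noncomputable def lrDecision (k ξ u v : ℝ) : ℝ :=
  if k * v < u then 1 else if u = k * v then ξ else 0

theorem lrDecision_mono {k ξ : ℝ} (hξ : ξ ∈ Set.Icc (0 : ℝ) 1) {u u' : ℝ} (v : ℝ)
    (h : u ≤ u') : lrDecision k ξ u v ≤ lrDecision k ξ u' v := by
  obtain ⟨hξ0, hξ1⟩ := hξ
  unfold lrDecision
  split_ifs <;> grind

theorem lrDecision_mul (k ξ : ℝ) {c : ℝ} (hc : 0 < c) (u v : ℝ) :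
    lrDecision k ξ (c * u) (c * v) = lrDecision k ξ u v := by
  simp only [lrDecision, mul_left_comm k c, mul_lt_mul_iff_right₀ hc,
    mul_right_inj' hc.ne']

variable {n : ℕ} {pt pb : Fin n → ℝ} {k ξ : ℝ}

theorem lrt_eq_lrDecision (y : Fin n → Bool) :
    lrt pt pb k ξ y = lrDecision k ξ (lik pt y) (lik pb y) := rfl

theorem lrt_update_true_eq_false {i : Fin n} (hpt : pt i ∈ Set.Ioo (0 : ℝ) 1)
    (hpb : pb i = pt i) (y : Fin n → Bool) :
    lrt pt pb k ξ (update y i true) = lrt pt pb k ξ (update y i false) := by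
  simp only [lrt_eq_lrDecision, lik_update, hpb, if_true, Bool.false_eq_true, if_false]
  rw [lrDecision_mul k ξ hpt.1, lrDecision_mul k ξ (sub_pos.2 hpt.2)]

theorem lrt_update_le (hpt : ∀ j, pt j ∈ Set.Icc (0 : ℝ) 1) (hξ : ξ ∈ Set.Icc (0 : ℝ) 1)
    {i : Fin n} (hpb : pb i = 1 / 2) {c c' : Bool}
    (h : (if c then pt i else 1 - pt i) ≤ (if c' then pt i else 1 - pt i)) (y : Fin n → Bool) :
    lrt pt pb k ξ (update y i c) ≤ lrt pt pb k ξ (update y i c') := by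
  have hpb_factor (d : Bool) : (if d then pb i else 1 - pb i) = 1 / 2 := by
    cases d <;> norm_num [hpb]
  rw [lrt_eq_lrDecision, lrt_eq_lrDecision, lik_update pb, lik_update pb, hpb_factor,
    hpb_factor]
  exact lrDecision_mono hξ _ (by
    rw [lik_update, lik_update]
    exact mul_le_mul_of_nonneg_right h (likErase_nonneg hpt i y))

end LikelihoodRatioTest

section LeastFavorable

variable {n K : ℕ} {X : Fin n → Fin K → ℝ} {b : Fin K → ℝ} {pt : Fin n → ℝ}

theorem pbar_mem_Icc (hpt : ∀ i, pt i ∈ Set.Ioo (0 : ℝ) 1) (i : Fin n) :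
    pbar X b pt i ∈ Set.Icc (0 : ℝ) 1 := by
  unfold pbar
  split_ifs
  · norm_num
  · exact Set.Ioo_subset_Icc_self (hpt i)

theorem pbar_cases {p : Fin n → ℝ} (hp : p ∈ nullSet X b) (i : Fin n) :
    pbar X b pt i = pt i ∨
      (pbar X b pt i = 1 / 2 ∧ p i ≤ 1 / 2 ∧ 1 / 2 ≤ pt i) ∨
      (pbar X b pt i = 1 / 2 ∧ pt i ≤ 1 / 2 ∧ 1 / 2 ≤ p i) := by
  obtain ⟨hnonneg, hnonpos⟩ := hp.2 i
  unfold pbar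
  split_ifs with h
  · rcases lt_trichotomy (∑ j, X i j * b j) 0 with hS | hS | hS
    · have : 1 / 2 < pt i := by rcases h with h | h <;> nlinarith
      exact Or.inr (Or.inl ⟨rfl, hnonpos hS.le, this.le⟩)
    · have : pt i < 1 / 2 := (h.resolve_left (by simp [hS])).2
      exact Or.inr (Or.inr ⟨rfl, this.le, hnonneg hS.ge⟩)
    · have : pt i < 1 / 2 := by rcases h with h | h <;> nlinarith
      exact Or.inr (Or.inr ⟨rfl, this.le, hnonneg hS.le⟩)
  · exact Or.inl rfl

theorem lrt_pbar_update_sign (hpt : ∀ i, pt i ∈ Set.Ioo (0 : ℝ) 1) {ξ : ℝ}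
    (hξ : ξ ∈ Set.Icc (0 : ℝ) 1) (k : ℝ) {p : Fin n → ℝ} (hp : p ∈ nullSet X b) (i : Fin n)
    (y : Fin n → Bool) :
    (p i - pbar X b pt i) * (lrt pt (pbar X b pt) k ξ (update y i true) -
      lrt pt (pbar X b pt) k ξ (update y i false)) ≤ 0 := by
  have hpt' j := Set.Ioo_subset_Icc_self (hpt j)
  rcases pbar_cases (pt := pt) hp i with h | ⟨h, hpi, hpti⟩ | ⟨h, hpti, hpi⟩
  · rw [lrt_update_true_eq_false (hpt i) h, sub_self, mul_zero]
  · have hmono := lrt_update_le (k := k) (c := false) (c' := true) hpt' hξ h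
      (by simp only [if_true, Bool.false_eq_true, if_false]; linarith) y
    exact mul_nonpos_of_nonpos_of_nonneg (by linarith) (sub_nonneg.2 hmono)
  · have hmono := lrt_update_le (k := k) (c := true) (c' := false) hpt' hξ h
      (by simp only [if_true, Bool.false_eq_true, if_false]; linarith) y
    exact mul_nonpos_of_nonneg_of_nonpos (by linarith) (sub_nonpos.2 hmono)

end LeastFavorable

theorem theorem6_size_control_general
    {n K : ℕ}
    (X : Fin n → Fin K → ℝ) (b : Fin K → ℝ)
    (pt : Fin n → ℝ) (hpt : ∀ i, pt i ∈ Set.Ioo (0 : ℝ) 1)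
    (α : ℝ)
    (k ξ : ℝ) (hξ : ξ ∈ Set.Icc (0 : ℝ) 1)
    (hcal : rejProb (lrt pt (pbar X b pt) k ξ) (pbar X b pt) = α) :
    ∀ p ∈ nullSet X b, rejProb (lrt pt (pbar X b pt) k ξ) p ≤ α := by
  intro p hp
  rw [← hcal]
  refine le_of_forall_update_le _ fun r hr i =>
    rejProb_update_le_of_sign (fun j => ?_) (lrt_pbar_update_sign hpt hξ k hp i)
  rcases hr j with h | h <;> rw [h]
  · exact hp.1 j
  · exact pbar_mem_Icc hpt j

/-- Size-control part of Theorem 6: the likelihood ratio test `φ̄` controls size over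
the composite null `N(b)`: `RP_{φ̄}(p) ≤ α` for every `p ∈ N(b)`. -/
theorem theorem6_size_control
    {n K : ℕ} (hn : 1 ≤ n)
    (X : Fin n → Fin K → ℝ) (b : Fin K → ℝ)
    (pt : Fin n → ℝ) (hpt : ∀ i, pt i ∈ Set.Ioo (0 : ℝ) 1)
    (α : ℝ) (hα : α ∈ Set.Ioo (0 : ℝ) 1)
    (k ξ : ℝ) (hk : 0 ≤ k) (hξ : ξ ∈ Set.Icc (0 : ℝ) 1)
    (hcal : rejProb (lrt pt (pbar X b pt) k ξ) (pbar X b pt) = α) :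
    ∀ p ∈ nullSet X b, rejProb (lrt pt (pbar X b pt) k ξ) p ≤ α :=
  theorem6_size_control_general X b pt hpt α k ξ hξ hcal
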